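/- arXiv:2107.06866 — 3 statements merged into one kernel-verified Lean document; each statement's English description precedes it below -/
import Mathlib

section
/- If e is an event of an occurrence net enabled at a B-cut γ (i.e., pre(e) ⊆ γ) and no element of γ is in conflict with e, then γ + e := (γ \ pre(e)) ∪ post(e) is again a B-cut, and γ < γ + e. -/
/-- Reflexive-transitive closure of the flow relation. -/
def Fstar {X : Type} (F : X → X → Prop) : X → X → Prop := Relation.ReflTransGen F

/-- Transitive closure of the flow relation. -/
def Fplus {X : Type} (F : X → X → Prop) : X → X → Prop := Relation.TransGen F

/-- `x ♮ y`: there are distinct events with a common precondition, one below `x`,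
the other below `y`. -/
def Conflict {X : Type} (F : X → X → Prop) (isEvent : X → Prop) (x y : X) : Prop :=
  ∃ e1 e2, e1 ≠ e2 ∧ isEvent e1 ∧ isEvent e2 ∧ Fstar F e1 x ∧ Fstar F e2 y ∧
    ∃ p, F p e1 ∧ F p e2

/-- `x co y`: distinct, unordered by `F*`, and not in conflict. -/
def Co {X : Type} (F : X → X → Prop) (isEvent : X → Prop) (x y : X) : Prop :=
  x ≠ y ∧ ¬ Fstar F x y ∧ ¬ Fstar F y x ∧ ¬ Conflict F isEvent x y

/-- Occurrence net axioms (elements are `X`, events are those satisfying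
`isEvent`, conditions the others): the flow goes between conditions and events,
conditions have at most one input event, `F*` is a partial order (antisymmetry),
finite pasts, and no self-conflict. -/
def OccurrenceNet {X : Type} (F : X → X → Prop) (isEvent : X → Prop) : Prop :=
  (∀ x y, F x y → (isEvent x ↔ ¬ isEvent y)) ∧
  (∀ b, ¬ isEvent b → ∀ y z, F y b → F z b → y = z) ∧
  (∀ x y, Fstar F x y → Fstar F y x → x = y) ∧
  (∀ x, {y | Fstar F y x}.Finite) ∧
  (∀ x, ¬ Conflict F isEvent x x)

/-- A B-cut: a maximal set of pairwise concurrent conditions. -/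
def BCut {X : Type} (F : X → X → Prop) (isEvent : X → Prop) (γ : Set X) : Prop :=
  (∀ b ∈ γ, ¬ isEvent b) ∧ γ.Pairwise (Co F isEvent) ∧
  ∀ b, ¬ isEvent b → (∀ b' ∈ γ, b ≠ b' → Co F isEvent b b') → b ∈ γ

/-- The order on B-cuts. -/
def CutLt {X : Type} (F : X → X → Prop) (γ1 γ2 : Set X) : Prop :=
  (∀ y ∈ γ2, ∃ x ∈ γ1, Fstar F x y) ∧
  (∀ x ∈ γ1, ∃ y ∈ γ2, Fstar F x y) ∧
  (∃ x ∈ γ1, ∃ y ∈ γ2, Fplus F x y)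

/-- Preconditions of an element. -/
def preSet {X : Type} (F : X → X → Prop) (x : X) : Set X := {p | F p x}

/-- Postconditions of an element. -/
def postSet {X : Type} (F : X → X → Prop) (x : X) : Set X := {p | F x p}

theorem stmt_6 {X : Type} (F : X → X → Prop) (isEvent : X → Prop)
    (hocc : OccurrenceNet F isEvent)
    -- every event has nonempty pre- and post-set
    (hpre : ∀ e, isEvent e → (preSet F e).Nonempty)
    (hpost : ∀ e, isEvent e → (postSet F e).Nonempty)
    (γ : Set X) (e : X)
    (hγ : BCut F isEvent γ) (he : isEvent e)
    -- e is enabled at γ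
    (hen : preSet F e ⊆ γ)
    -- no element of γ is in conflict with e
    (hnc : ∀ b ∈ γ, ¬ Conflict F isEvent b e) :
    BCut F isEvent ((γ \ preSet F e) ∪ postSet F e) ∧
    CutLt F γ ((γ \ preSet F e) ∪ postSet F e) := by
  obtain ⟨hbip, huniq, hanti, -, hnoself⟩ := hocc
  obtain ⟨hcond, hpw, hmax⟩ := hγ
  obtain ⟨p0, hp0⟩ := hpre e he
  obtain ⟨q0, hq0⟩ := hpost e he
  have hnotE_pre : ∀ p, F p e → ¬ isEvent p := fun p hp hPe => ((hbip p e hp).mp hPe) he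
  have hnotE_post : ∀ q, F e q → ¬ isEvent q := fun q hq => (hbip e q hq).mp he
  have hA : ∀ b ∈ γ, ¬ Fstar F e b := by
    intro b hb hfb
    have hp0γ : p0 ∈ γ := hen hp0
    have hpb : Fstar F p0 b := Relation.ReflTransGen.head hp0 hfb
    by_cases hpb' : p0 = b
    · subst hpb'
      have h' : e = p0 := hanti e p0 hfb (Relation.ReflTransGen.single hp0)
      exact hnotE_pre p0 hp0 (h' ▸ he)
    · exact (hpw hp0γ hb hpb').2.1 hpb
  have hdisj : ∀ q, F e q → q ∉ γ := fun q hq hqγ =>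
    hA q hqγ (Relation.ReflTransGen.single hq)
  have huniqIn : ∀ q, F e q → ∀ w, F w q → w = e := fun q hq w hw =>
    huniq q (hnotE_post q hq) w e hw hq
  have hD : ∀ x q, F e q → Fstar F x q → x = q ∨ Fstar F x e := by
    intro x q hq hxq
    rcases Relation.ReflTransGen.cases_tail hxq with h | ⟨w, hxw, hwq⟩
    · exact Or.inl h.symm
    · exact Or.inr (huniqIn q hq w hwq ▸ hxw)
  have hF : ∀ x ∈ γ, Fstar F x e → F x e := by
    intro x hx hxe
    have hxne : x ≠ e := fun h => hcond x hx (h ▸ he)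
    rcases Relation.ReflTransGen.cases_tail hxe with h | ⟨v, hxv, hve⟩
    · exact absurd h.symm hxne
    · have hvγ : v ∈ γ := hen hve
      by_cases hxv' : x = v
      · exact hxv' ▸ hve
      · exact absurd hxv ((hpw hx hvγ hxv').2.1)
  have hext : ∀ x y z, Conflict F isEvent x y → Fstar F y z → Conflict F isEvent x z := by
    rintro x y z ⟨e1, e2, hne, h1, h2, hx, hy, p, hp1, hp2⟩ hyz
    exact ⟨e1, e2, hne, h1, h2, hx, hy.trans hyz, p, hp1, hp2⟩
  have hCq : ∀ x q, F e q → Conflict F isEvent x q → Conflict F isEvent x e := by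
    rintro x q hq ⟨e1, e2, hne, h1, h2, hx, hy, p, hp1, hp2⟩
    rcases hD e2 q hq hy with h | h
    · exact absurd (h ▸ h2) (hnotE_post q hq)
    · exact ⟨e1, e2, hne, h1, h2, hx, h, p, hp1, hp2⟩
  have hCoSymm : ∀ x y, Co F isEvent x y → Co F isEvent y x := by
    rintro x y ⟨h1, h2, h3, h4⟩
    refine ⟨h1.symm, h3, h2, ?_⟩
    rintro ⟨e1, e2, hne, he1, he2, hx, hy, p, hp1, hp2⟩
    exact h4 ⟨e2, e1, hne.symm, he2, he1, hy, hx, p, hp2, hp1⟩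
  have hmixed : ∀ x ∈ γ, x ∉ preSet F e → ∀ q, F e q → Co F isEvent x q := by
    intro x hx hxpre q hq
    refine ⟨?_, ?_, ?_, ?_⟩
    · rintro rfl; exact hdisj x hq hx
    · intro hxq
      rcases hD x q hq hxq with rfl | h
      · exact hdisj x hq hx
      · exact hxpre (hF x hx h)
    · intro hqx
      exact hA x hx (Relation.ReflTransGen.head hq hqx)
    · intro hc
      exact hnc x hx (hCq x q hq hc)
  have hpost2 : ∀ q1 q2, F e q1 → F e q2 → q1 ≠ q2 → Co F isEvent q1 q2 := by
    intro q1 q2 h1 h2 hne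
    have horder : ∀ a b, F e a → F e b → a ≠ b → ¬ Fstar F a b := by
      intro a b ha hb hab hfab
      rcases hD a b hb hfab with h | h
      · exact hab h
      · have h' : a = e := hanti a e h (Relation.ReflTransGen.single ha)
        exact hnotE_post a ha (h' ▸ he)
    refine ⟨hne, horder q1 q2 h1 h2 hne, horder q2 q1 h2 h1 hne.symm, ?_⟩
    intro hc
    obtain ⟨e1, e2, hE, he1, he2, hx, hy, p, hp1, hp2⟩ := hCq q1 q2 h2 hc
    rcases hD e1 q1 h1 hx with h | h
    · exact hnotE_post q1 h1 (h ▸ he1)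
    · exact hnoself e ⟨e1, e2, hE, he1, he2, h, hy, p, hp1, hp2⟩
  constructor
  · refine ⟨?_, ?_, ?_⟩
    · rintro b (⟨hbγ, -⟩ | hb)
      · exact hcond b hbγ
      · exact hnotE_post b hb
    · rintro x (⟨hx1, hx2⟩ | hx) y (⟨hy1, hy2⟩ | hy) hne
      · exact hpw hx1 hy1 hne
      · exact hmixed x hx1 hx2 y hy
      · exact hCoSymm y x (hmixed y hy1 hy2 x hx)
      · exact hpost2 x y hx hy hne
    · intro b hbC hco
      by_cases hbq : b ∈ postSet F e
      · exact Or.inr hbq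
      · have hcoPost : ∀ v, F e v → Co F isEvent b v := fun v hv =>
          hco v (Or.inr hv) (fun h => hbq (h ▸ hv))
      -- e is not below b
        have hnbe : ¬ Fstar F e b := by
          intro h
          rcases Relation.ReflTransGen.cases_head h with h' | ⟨v, hev, hvb⟩
          · exact (hbC (h' ▸ he)).elim
          · exact (hcoPost v hev).2.2.1 hvb
        have hcoγ : ∀ b'' ∈ γ, b ≠ b'' → Co F isEvent b b'' := by
          intro b'' hb'' hne
          by_cases hbp : b'' ∈ preSet F e
          · refine ⟨hne, ?_, ?_, ?_⟩
            · intro h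
              exact (hcoPost q0 hq0).2.1
                (h.trans (Relation.ReflTransGen.head hbp (Relation.ReflTransGen.single hq0)))
            · intro h
              rcases Relation.ReflTransGen.cases_head h with h' | ⟨w, hbw, hwb⟩
              · exact hne h'.symm
              · by_cases hwe : w = e
                · exact hnbe (hwe ▸ hwb)
                · have hwE : isEvent w := by
                    by_contra hwE
                    exact hcond b'' hb'' ((hbip b'' w hbw).mpr hwE)
                  exact (hcoPost q0 hq0).2.2.2
                    ⟨w, e, hwe, hwE, he, hwb, Relation.ReflTransGen.single hq0, b'', hbw, hbp⟩
            · intro hc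
              exact (hcoPost q0 hq0).2.2.2
                (hext b b'' q0 hc (Relation.ReflTransGen.head hbp (Relation.ReflTransGen.single hq0)))
          · exact hco b'' (Or.inl ⟨hb'', hbp⟩) hne
        have hbγ : b ∈ γ := hmax b hbC hcoγ
        have hbnp : b ∉ preSet F e := by
          intro hbp
          exact (hcoPost q0 hq0).2.1
            (Relation.ReflTransGen.head hbp (Relation.ReflTransGen.single hq0))
        exact Or.inl ⟨hbγ, hbnp⟩
  · refine ⟨?_, ?_, p0, hen hp0, q0, Or.inr hq0,
      Relation.TransGen.head hp0 (Relation.TransGen.single hq0)⟩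
    · rintro y (⟨hyγ, -⟩ | hy)
      · exact ⟨y, hyγ, Relation.ReflTransGen.refl⟩
      · exact ⟨p0, hen hp0, Relation.ReflTransGen.head hp0 (Relation.ReflTransGen.single hy)⟩
    · intro x hx
      by_cases hxp : x ∈ preSet F e
      · exact ⟨q0, Or.inr hq0, Relation.ReflTransGen.head hxp (Relation.ReflTransGen.single hq0)⟩
      · exact ⟨x, Or.inl ⟨hx, hxp⟩, Relation.ReflTransGen.refl⟩
end

section
/- For a branching process (N, μ) of a contact-free elementary net system Σ: if γ is a B-cut whose corresponding marking is μ(γ), and event e is enabled at γ, then the transition μ(e) is enabled at the marking μ(γ) in Σ, and μ(γ + e) = (μ(γ) \ pre(μ(e))) ∪ post(μ(e)). -/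
/-- Branching process of an elementary net system `(P, T, preT, postT, m0)`:
an occurrence net with condition labels `μp` and event labels `μt` such that
`μp` restricts to bijections on pre- and post-sets of events, `μp` maps the
minimal conditions bijectively to `m0`, and events with equal pre-sets and
labels coincide. -/
def BranchingProcess {X P T : Type} (F : X → X → Prop) (isEvent : X → Prop)
    (μp : X → P) (μt : X → T)
    (preT postT : T → Set P) (m0 : Set P) : Prop :=
  OccurrenceNet F isEvent ∧
  (∀ e, isEvent e → Set.BijOn μp (preSet F e) (preT (μt e))) ∧
  (∀ e, isEvent e → Set.BijOn μp (postSet F e) (postT (μt e))) ∧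
  Set.BijOn μp {x | ¬ isEvent x ∧ ∀ y, ¬ F y x} m0 ∧
  (∀ e1 e2, isEvent e1 → isEvent e2 → preSet F e1 = preSet F e2 →
    μt e1 = μt e2 → e1 = e2)

/-- `t` is enabled at marking `m` in the net system. -/
def ENenabled {P T : Type} (preT postT : T → Set P) (t : T) (m : Set P) : Prop :=
  preT t ⊆ m ∧ postT t ∩ m = ∅

/-- Firing `t` at `m`. -/
def ENfire {P T : Type} (preT postT : T → Set P) (t : T) (m : Set P) : Set P :=
  (m \ preT t) ∪ postT t

/-- One firing step between markings. -/
def ENstep {P T : Type} (preT postT : T → Set P) (m m' : Set P) : Prop :=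
  ∃ t, ENenabled preT postT t m ∧ m' = ENfire preT postT t m

/-- Reachability of markings from `m0`. -/
def ENreachable {P T : Type} (preT postT : T → Set P) (m0 m : Set P) : Prop :=
  Relation.ReflTransGen (ENstep preT postT) m0 m


namespace Stmt8Aux

variable {X P T : Type}

/-- The set of conditions remaining after "firing" the event set `C` from the
minimal conditions: minimal-or-produced, and not consumed. -/
def slice (F : X → X → Prop) (isEvent : X → Prop) (C : Set X) : Set X :=
  {x | ((¬ isEvent x ∧ ∀ y, ¬ F y x) ∨ ∃ g ∈ C, F g x) ∧ ∀ g ∈ C, ¬ F x g}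

lemma not_fplus_self {F : X → X → Prop} {isEvent : X → Prop}
    (hon : OccurrenceNet F isEvent) (x : X) : ¬ Fplus F x x := by
  intro h
  obtain ⟨y, hxy, hyx⟩ := Relation.TransGen.head'_iff.mp h
  have hxyeq : x = y := hon.2.2.1 x y (Relation.ReflTransGen.single hxy) hyx
  exact iff_not_self (hon.1 x x (by rw [hxyeq] at hxy ⊢; exact hxy))

lemma exists_maximal (r : X → X → Prop) (htr : Transitive r) (hirr : ∀ x, ¬ r x x) :
    ∀ (n : ℕ) (S : Set X), S.Finite → S.ncard = n → S.Nonempty →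
      ∃ a ∈ S, ∀ b ∈ S, ¬ r a b := by
  intro n
  induction n with
  | zero =>
    intro S hf h0 hne
    exact absurd ((Set.ncard_eq_zero hf).mp h0) (Set.nonempty_iff_ne_empty.mp hne)
  | succ n ih =>
    intro S hf h0 hne
    obtain ⟨a, ha⟩ := hne
    by_cases hb : ∃ b ∈ S, r a b
    · obtain ⟨b, hbS, hab⟩ := hb
      have hba : b ≠ a := fun h => hirr a (h ▸ hab)
      have hne' : (S \ {a}).Nonempty := ⟨b, hbS, hba⟩
      have hf' : (S \ {a}).Finite := hf.diff
      have hc' : (S \ {a}).ncard = n := by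
        rw [Set.ncard_diff_singleton_of_mem ha, h0]; omega
      obtain ⟨m, hmS, hm⟩ := ih (S \ {a}) hf' hc' hne'
      refine ⟨m, hmS.1, fun c hcS hmc => ?_⟩
      by_cases hca : c = a
      · exact hm b ⟨hbS, hba⟩ (htr (hca ▸ hmc) hab)
      · exact hm c ⟨hcS, hca⟩ hmc
    · exact ⟨a, ha, fun b hbS hab => hb ⟨b, hbS, hab⟩⟩

lemma slice_key {F : X → X → Prop} {isEvent : X → Prop}
    {μp : X → P} {μt : X → T} {preT postT : T → Set P} {m0 : Set P}
    (hbp : BranchingProcess F isEvent μp μt preT postT m0)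
    (hcf : ∀ m t, ENreachable preT postT m0 m → preT t ⊆ m → postT t ∩ m = ∅) :
    ∀ (n : ℕ) (C : Set X), C.Finite → C.ncard = n →
      (∀ f ∈ C, isEvent f) →
      (∀ f ∈ C, ∀ p, F p f → (∃ g ∈ C, F g p) ∨ (∀ y, ¬ F y p)) →
      (∀ f ∈ C, ∀ g ∈ C, f ≠ g → ∀ p, ¬ (F p f ∧ F p g)) →
      Set.InjOn μp (slice F isEvent C) ∧
        ENreachable preT postT m0 (μp '' slice F isEvent C) := by
  obtain ⟨hon, hpreb, hpostb, hminb, _⟩ := hbp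
  intro n
  induction n with
  | zero =>
    intro C hf h0 _ _ _
    have hC : C = ∅ := (Set.ncard_eq_zero hf).mp h0
    subst hC
    have hsl : slice F isEvent (∅ : Set X) = {x | ¬ isEvent x ∧ ∀ y, ¬ F y x} := by
      ext x; simp [slice]
    rw [hsl]
    exact ⟨hminb.injOn, by rw [hminb.image_eq]; exact Relation.ReflTransGen.refl⟩
  | succ n ih =>
    intro C hf h0 hCev hCdc hCcf
    have hne : C.Nonempty := Set.nonempty_of_ncard_ne_zero (by rw [h0]; exact n.succ_ne_zero)
    obtain ⟨f, hfC, hfmax⟩ := exists_maximal (Fplus F)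
      (fun _ _ _ h1 h2 => Relation.TransGen.trans h1 h2)
      (fun x => not_fplus_self ⟨hon.1, hon.2.1, hon.2.2.1, hon.2.2.2.1, hon.2.2.2.2⟩ x)
      (n+1) C hf h0 hne
    have hfe : isEvent f := hCev f hfC
    have hf' : (C \ {f}).Finite := hf.diff
    have hc' : (C \ {f}).ncard = n := by
      rw [Set.ncard_diff_singleton_of_mem hfC, h0]; omega
    have hnotboth : ∀ p, F p f → F f p → False := by
      intro p hh1 hh2
      have hpf : p = f := hon.2.2.1 p f (Relation.ReflTransGen.single hh1)
        (Relation.ReflTransGen.single hh2)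
      exact iff_not_self (hon.1 p p (by rw [hpf] at hh1 ⊢; exact hh1))
    obtain ⟨hinj', hreach'⟩ := ih (C \ {f}) hf' hc'
      (fun g hg => hCev g hg.1)
      (by
        intro g hg p hpg
        rcases hCdc g hg.1 p hpg with ⟨h, hhC, hhp⟩ | hmin
        · left
          refine ⟨h, ⟨hhC, fun hm => ?_⟩, hhp⟩
          have hhf : h = f := Set.mem_singleton_iff.mp hm
          exact hfmax g hg.1 (Relation.TransGen.head (hhf ▸ hhp)
            (Relation.TransGen.single hpg))
        · exact Or.inr hmin)
      (fun g hg g' hg' hne' p hp => hCcf g hg.1 g' hg'.1 hne' p hp)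
    have hpre : preSet F f ⊆ slice F isEvent (C \ {f}) := by
      intro p hp
      constructor
      · rcases hCdc f hfC p hp with ⟨g, hgC, hgp⟩ | hmin
        · have hgf : g ≠ f := fun h => hnotboth p hp (h ▸ hgp)
          exact Or.inr ⟨g, ⟨hgC, fun hm => hgf (Set.mem_singleton_iff.mp hm)⟩, hgp⟩
        · have hpe : ¬ isEvent p := fun h => ((hon.1 p f hp).mp h) hfe
          exact Or.inl ⟨hpe, hmin⟩
      · intro g hg hpg
        exact hCcf f hfC g hg.1
          (fun h => hg.2 (Set.mem_singleton_iff.mpr h.symm)) p ⟨hp, hpg⟩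
    have hpost : postSet F f ⊆ slice F isEvent C := by
      intro x hx
      refine ⟨Or.inr ⟨f, hfC, hx⟩, ?_⟩
      intro g hgC hxg
      by_cases hgf : g = f
      · exact hnotboth x (hgf ▸ hxg) hx
      · exact hfmax g hgC (Relation.TransGen.head hx (Relation.TransGen.single hxg))
    have hslice : slice F isEvent C
        = (slice F isEvent (C \ {f}) \ preSet F f) ∪ postSet F f := by
      ext x
      constructor
      · rintro ⟨h1, h2⟩
        by_cases hfx : F f x
        · exact Or.inr hfx
        · left
          refine ⟨⟨?_, fun g hg => h2 g hg.1⟩, h2 f hfC⟩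
          rcases h1 with hmin | ⟨g, hgC, hgx⟩
          · exact Or.inl hmin
          · have hgf : g ≠ f := fun h => hfx (h ▸ hgx)
            exact Or.inr ⟨g, ⟨hgC, fun hm => hgf (Set.mem_singleton_iff.mp hm)⟩, hgx⟩
      · rintro (⟨⟨h1, h2⟩, hnp⟩ | hx)
        · refine ⟨?_, ?_⟩
          · rcases h1 with hmin | ⟨g, hg, hgx⟩
            · exact Or.inl hmin
            · exact Or.inr ⟨g, hg.1, hgx⟩
          · intro g hgC hxg
            by_cases hgf : g = f
            · exact hnp (hgf ▸ hxg)
            · exact h2 g ⟨hgC, fun hm => hgf (Set.mem_singleton_iff.mp hm)⟩ hxg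
        · exact hpost hx
    have hpreimg : μp '' preSet F f = preT (μt f) := (hpreb f hfe).image_eq
    have hpostimg : μp '' postSet F f = postT (μt f) := (hpostb f hfe).image_eq
    have hensub : preT (μt f) ⊆ μp '' slice F isEvent (C \ {f}) := by
      rw [← hpreimg]; exact Set.image_mono hpre
    have hdisj : postT (μt f) ∩ μp '' slice F isEvent (C \ {f}) = ∅ :=
      hcf _ _ hreach' hensub
    have henab : ENenabled preT postT (μt f) (μp '' slice F isEvent (C \ {f})) :=
      ⟨hensub, hdisj⟩
    have hdiffimg : μp '' (slice F isEvent (C \ {f}) \ preSet F f)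
        = μp '' slice F isEvent (C \ {f}) \ preT (μt f) := by
      rw [← hpreimg]
      ext z
      constructor
      · rintro ⟨x, ⟨hxs, hxp⟩, rfl⟩
        refine ⟨⟨x, hxs, rfl⟩, ?_⟩
        rintro ⟨y, hyp, hyx⟩
        have hyxeq : y = x := hinj' (hpre hyp) hxs hyx
        exact hxp (hyxeq ▸ hyp)
      · rintro ⟨⟨x, hxs, rfl⟩, hz⟩
        exact ⟨x, ⟨hxs, fun hxp => hz ⟨x, hxp, rfl⟩⟩, rfl⟩
    have himg : μp '' slice F isEvent C
        = ENfire preT postT (μt f) (μp '' slice F isEvent (C \ {f})) := by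
      rw [hslice, Set.image_union, hdiffimg, hpostimg]; rfl
    have hreachC : ENreachable preT postT m0 (μp '' slice F isEvent C) :=
      Relation.ReflTransGen.tail hreach' ⟨μt f, henab, himg⟩
    have hcross : ∀ a b, a ∈ slice F isEvent (C \ {f}) \ preSet F f →
        b ∈ postSet F f → μp a = μp b → False := by
      intro a b ha hb hab
      have hb1 : μp b ∈ postT (μt f) := by rw [← hpostimg]; exact ⟨b, hb, rfl⟩
      have ha1 : μp a ∈ μp '' slice F isEvent (C \ {f}) := ⟨a, ha.1, rfl⟩
      have : μp b ∈ postT (μt f) ∩ μp '' slice F isEvent (C \ {f}) :=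
        ⟨hb1, hab ▸ ha1⟩
      rw [hdisj] at this
      exact this
    have hinjC : Set.InjOn μp (slice F isEvent C) := by
      rw [hslice]
      rintro x hx y hy hxy
      rcases hx with hx | hx <;> rcases hy with hy | hy
      · exact hinj' hx.1 hy.1 hxy
      · exact (hcross x y hx hy hxy).elim
      · exact (hcross y x hy hx hxy.symm).elim
      · exact (hpostb f hfe).injOn hx hy hxy
    exact ⟨hinjC, hreachC⟩

lemma co_inj {F : X → X → Prop} {isEvent : X → Prop}
    {μp : X → P} {μt : X → T} {preT postT : T → Set P} {m0 : Set P}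
    (hbp : BranchingProcess F isEvent μp μt preT postT m0)
    (hcf : ∀ m t, ENreachable preT postT m0 m → preT t ⊆ m → postT t ∩ m = ∅)
    (b b' : X) (hb : ¬ isEvent b) (hb' : ¬ isEvent b')
    (h1 : ¬ Fstar F b b') (h2 : ¬ Fstar F b' b) (h3 : ¬ Conflict F isEvent b b')
    (heq : μp b = μp b') : b = b' := by
  have hon := hbp.1
  set C : Set X := {f | isEvent f ∧ (Fstar F f b ∨ Fstar F f b')} with hCdef
  have hfin : C.Finite := ((hon.2.2.2.1 b).union (hon.2.2.2.1 b')).subset (by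
    rintro x ⟨_, hx | hx⟩
    · exact Or.inl hx
    · exact Or.inr hx)
  have hev : ∀ f ∈ C, isEvent f := fun f hf => hf.1
  have hdc : ∀ f ∈ C, ∀ p, F p f → (∃ g ∈ C, F g p) ∨ (∀ y, ¬ F y p) := by
    intro f hf p hpf
    by_cases hy : ∃ g, F g p
    · obtain ⟨g, hgp⟩ := hy
      have hpcond : ¬ isEvent p := fun h => ((hon.1 p f hpf).mp h) hf.1
      have hge : isEvent g := (hon.1 g p hgp).mpr hpcond
      left
      refine ⟨g, ⟨hge, ?_⟩, hgp⟩
      rcases hf.2 with hfb | hfb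
      · exact Or.inl (Relation.ReflTransGen.head hgp (Relation.ReflTransGen.head hpf hfb))
      · exact Or.inr (Relation.ReflTransGen.head hgp (Relation.ReflTransGen.head hpf hfb))
    · exact Or.inr fun y hyp => hy ⟨y, hyp⟩
  have hcf' : ∀ f ∈ C, ∀ g ∈ C, f ≠ g → ∀ p, ¬ (F p f ∧ F p g) := by
    rintro f hf g hg hfg p ⟨hpf, hpg⟩
    rcases hf.2 with hfb | hfb <;> rcases hg.2 with hgb | hgb
    · exact hon.2.2.2.2 b ⟨f, g, hfg, hf.1, hg.1, hfb, hgb, p, hpf, hpg⟩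
    · exact h3 ⟨f, g, hfg, hf.1, hg.1, hfb, hgb, p, hpf, hpg⟩
    · exact h3 ⟨g, f, hfg.symm, hg.1, hf.1, hgb, hfb, p, hpg, hpf⟩
    · exact hon.2.2.2.2 b' ⟨f, g, hfg, hf.1, hg.1, hfb, hgb, p, hpf, hpg⟩
  have hbmem : b ∈ slice F isEvent C := by
    constructor
    · by_cases hy : ∃ g, F g b
      · obtain ⟨g, hgb⟩ := hy
        have hge : isEvent g := (hon.1 g b hgb).mpr hb
        exact Or.inr ⟨g, ⟨hge, Or.inl (Relation.ReflTransGen.single hgb)⟩, hgb⟩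
      · exact Or.inl ⟨hb, fun y hyb => hy ⟨y, hyb⟩⟩
    · intro g hg hbg
      rcases hg.2 with hgb | hgb
      · have hbg' : b = g := hon.2.2.1 b g (Relation.ReflTransGen.single hbg) hgb
        exact hb (by rw [hbg']; exact hg.1)
      · exact h1 (Relation.ReflTransGen.head hbg hgb)
  have hbmem' : b' ∈ slice F isEvent C := by
    constructor
    · by_cases hy : ∃ g, F g b'
      · obtain ⟨g, hgb⟩ := hy
        have hge : isEvent g := (hon.1 g b' hgb).mpr hb'
        exact Or.inr ⟨g, ⟨hge, Or.inr (Relation.ReflTransGen.single hgb)⟩, hgb⟩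
      · exact Or.inl ⟨hb', fun y hyb => hy ⟨y, hyb⟩⟩
    · intro g hg hbg
      rcases hg.2 with hgb | hgb
      · exact h2 (Relation.ReflTransGen.head hbg hgb)
      · have hbg' : b' = g := hon.2.2.1 b' g (Relation.ReflTransGen.single hbg) hgb
        exact hb' (by rw [hbg']; exact hg.1)
  obtain ⟨hinj, _⟩ := slice_key hbp hcf C.ncard C hfin rfl hev hdc hcf'
  exact hinj hbmem hbmem' heq

end Stmt8Aux

theorem stmt_8 {X P T : Type} (F : X → X → Prop) (isEvent : X → Prop)
    (μp : X → P) (μt : X → T) (preT postT : T → Set P) (m0 : Set P)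
    (hbp : BranchingProcess F isEvent μp μt preT postT m0)
    -- contact-freeness of Σ
    (hcf : ∀ m t, ENreachable preT postT m0 m → preT t ⊆ m → postT t ∩ m = ∅)
    (γ : Set X) (hγ : BCut F isEvent γ)
    -- the marking corresponding to γ is reachable
    (hreach : ENreachable preT postT m0 (μp '' γ))
    (e : X) (he : isEvent e)
    -- e is enabled at γ
    (hen : preSet F e ⊆ γ) :
    ENenabled preT postT (μt e) (μp '' γ) ∧
    μp '' ((γ \ preSet F e) ∪ postSet F e) =
      (μp '' γ \ preT (μt e)) ∪ postT (μt e) := by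
  have hpreimg : μp '' preSet F e = preT (μt e) := (hbp.2.1 e he).image_eq
  have hpostimg : μp '' postSet F e = postT (μt e) := (hbp.2.2.1 e he).image_eq
  have hsub : preT (μt e) ⊆ μp '' γ := by
    rw [← hpreimg]; exact Set.image_mono hen
  have hdisj : postT (μt e) ∩ μp '' γ = ∅ := hcf _ _ hreach hsub
  refine ⟨⟨hsub, hdisj⟩, ?_⟩
  have hdiff : μp '' (γ \ preSet F e) = μp '' γ \ preT (μt e) := by
    ext z
    constructor
    · rintro ⟨x, ⟨hxγ, hxp⟩, rfl⟩
      refine ⟨⟨x, hxγ, rfl⟩, ?_⟩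
      rw [← hpreimg]
      rintro ⟨y, hyp, hyx⟩
      have hyγ : y ∈ γ := hen hyp
      have hxy : x ≠ y := fun h => hxp (h.symm ▸ hyp)
      have hco := hγ.2.1 hxγ hyγ hxy
      exact hxy (Stmt8Aux.co_inj hbp hcf x y (hγ.1 x hxγ) (hγ.1 y hyγ)
        hco.2.1 hco.2.2.1 hco.2.2.2 hyx.symm)
    · rintro ⟨⟨x, hxγ, rfl⟩, hz⟩
      refine ⟨x, ⟨hxγ, fun hxp => hz ?_⟩, rfl⟩
      rw [← hpreimg]
      exact ⟨x, hxp, rfl⟩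
  rw [Set.image_union, hdiff, hpostimg]
end

section
/- Every finite increasing sequence of B-cuts γ0 < γ1 < … < γn of a run of the unfolding, where each γi+1 = γi + e_i for a single event e_i, determines a firing sequence μ(e_0) μ(e_1) … μ(e_{n-1}) of the net system from the marking μ(γ0), i.e., μ(γ0)[μ(e_0)⟩μ(γ1)[μ(e_1)⟩ … [μ(e_{n-1})⟩μ(γn). -/
section AuxBP

variable {X P T : Type} {F : X → X → Prop} {isEvent : X → Prop}
  {μp : X → P} {μt : X → T} {preT postT : T → Set P} {m0 : Set P}

lemma bp_no_cycle (hon : OccurrenceNet F isEvent) {x y : X}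
    (hxy : F x y) (hyx : Fstar F y x) : False := by
  have hx : x = y := hon.2.2.1 x y (Relation.ReflTransGen.single hxy) hyx
  subst hx
  exact iff_not_self (hon.1 x x hxy)

lemma bp_fplus_irrefl (hon : OccurrenceNet F isEvent) (x : X) :
    ¬ Fplus F x x := by
  intro h
  obtain ⟨b, hxb, hbx⟩ := (Relation.TransGen.head'_iff).mp h
  exact bp_no_cycle hon hxb hbx

lemma bp_cond_of_pre (hon : OccurrenceNet F isEvent) {p e : X}
    (h : F p e) (he : isEvent e) : ¬ isEvent p := by
  intro hp
  exact ((hon.1 p e h).mp hp) he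

lemma bp_event_of_flow (hon : OccurrenceNet F isEvent) {f x : X}
    (h : F f x) (hx : ¬ isEvent x) : isEvent f := by
  by_contra hf
  exact hx (((hon.1 f x h).not_left).mp hf)

/-- Minimal conditions. -/
def bpMins (F : X → X → Prop) (isEvent : X → Prop) : Set X :=
  {x | ¬ isEvent x ∧ ∀ y, ¬ F y x}

/-- Cut of a configuration. -/
def bpCut (F : X → X → Prop) (isEvent : X → Prop) (C : Set X) : Set X :=
  (bpMins F isEvent ∪ ⋃ f ∈ C, postSet F f) \ ⋃ f ∈ C, preSet F f

/-- Finite configurations. -/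
def bpConfig (F : X → X → Prop) (isEvent : X → Prop) (C : Set X) : Prop :=
  C.Finite ∧ (∀ f ∈ C, isEvent f) ∧
  (∀ g ∈ C, ∀ f, isEvent f → Fstar F f g → f ∈ C) ∧
  (∀ g ∈ C, ∀ g' ∈ C, ¬ Conflict F isEvent g g')

lemma bp_mem_cut (C : Set X) (x : X) :
    x ∈ bpCut F isEvent C ↔
      ((x ∈ bpMins F isEvent ∨ ∃ f ∈ C, F f x) ∧ ¬ ∃ g ∈ C, F x g) := by
  simp [bpCut, postSet, preSet]

lemma bp_exists_maximal {α : Type} {R : α → α → Prop} (htrans : Transitive R)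
    (hirr : ∀ x, ¬ R x x) {C : Set α} (hfin : C.Finite) :
    C.Nonempty → ∃ e ∈ C, ∀ f ∈ C, ¬ R e f := by
  suffices h : ∀ (n : ℕ) (D : Set α), D.Finite → D.ncard ≤ n → D.Nonempty →
      ∃ e ∈ D, ∀ f ∈ D, ¬ R e f from h C.ncard C hfin le_rfl
  intro n
  induction n with
  | zero =>
    rintro D hf hc ⟨x, hx⟩
    rw [Nat.le_zero, Set.ncard_eq_zero hf] at hc
    subst hc
    exact absurd hx (Set.notMem_empty x)
  | succ n ih =>
    rintro D hf hc ⟨x, hx⟩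
    by_cases hmax : ∀ f ∈ D, ¬ R x f
    · exact ⟨x, hx, hmax⟩
    · push_neg at hmax
      obtain ⟨y, hy, hRxy⟩ := hmax
      set E : Set α := {f | f ∈ D ∧ R x f} with hEdef
      have hEsub : E ⊆ D \ {x} := by
        rintro f ⟨hfD, hRf⟩
        refine ⟨hfD, ?_⟩
        rintro rfl
        exact hirr f hRf
      have hEfin : E.Finite := hf.subset fun f hfE => hfE.1
      have hEcard : E.ncard ≤ n := by
        have h1 : E.ncard ≤ (D \ {x}).ncard :=
          Set.ncard_le_ncard hEsub (hf.subset Set.diff_subset)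
        have h2 : (D \ {x}).ncard < D.ncard :=
          Set.ncard_diff_singleton_lt_of_mem hx hf
        omega
      obtain ⟨m, hm, hmmax⟩ := ih E hEfin hEcard ⟨y, hy, hRxy⟩
      refine ⟨m, hm.1, ?_⟩
      intro f hfD hRmf
      exact hmmax f ⟨hfD, htrans hm.2 hRmf⟩ hRmf

/-- Main induction: the cut of a finite configuration is labelled injectively
and its marking is reachable. -/
lemma bp_config_cut (hbp : BranchingProcess F isEvent μp μt preT postT m0)
    (hcf : ∀ m t, ENreachable preT postT m0 m → preT t ⊆ m → postT t ∩ m = ∅) :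
    ∀ (N : ℕ) (C : Set X), bpConfig F isEvent C → C.ncard ≤ N →
      Set.InjOn μp (bpCut F isEvent C) ∧
        ENreachable preT postT m0 (μp '' bpCut F isEvent C) := by
  have hon := hbp.1
  intro N
  induction N with
  | zero =>
    intro C hC hcard
    have hCe : C = ∅ := (Set.ncard_eq_zero hC.1).mp (Nat.le_zero.mp hcard)
    subst hCe
    have hcutE : bpCut F isEvent (∅ : Set X) = bpMins F isEvent := by
      simp [bpCut]
    rw [hcutE]
    have hbij : Set.BijOn μp (bpMins F isEvent) m0 := hbp.2.2.2.1
    exact ⟨hbij.injOn, by rw [hbij.image_eq]; exact Relation.ReflTransGen.refl⟩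
  | succ N ih =>
    intro C hC hcard
    rcases Set.eq_empty_or_nonempty C with rfl | hne
    · exact ih ∅ hC (by simp)
    obtain ⟨e, he, hemax⟩ := bp_exists_maximal
      (fun a b c => Relation.TransGen.trans) (bp_fplus_irrefl hon) hC.1 hne
    have hEe : isEvent e := hC.2.1 e he
    set C' : Set X := C \ {e} with hC'def
    have hCins : C = insert e C' := by
      rw [hC'def, Set.insert_diff_singleton, Set.insert_eq_self.mpr he]
    have hC'conf : bpConfig F isEvent C' := by
      refine ⟨hC.1.subset Set.diff_subset, fun f hf => hC.2.1 f hf.1, ?_, ?_⟩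
      · intro g hg f hfE hfg
        have hfC : f ∈ C := hC.2.2.1 g hg.1 f hfE hfg
        refine ⟨hfC, ?_⟩
        intro hfe
        rw [Set.mem_singleton_iff] at hfe
        subst hfe
        rcases Relation.reflTransGen_iff_eq_or_transGen.mp hfg with h | h
        · exact hg.2 (by rw [h]; rfl)
        · exact hemax g hg.1 h
      · intro g hg g' hg'
        exact hC.2.2.2 g hg.1 g' hg'.1
    have hcard' : C'.ncard ≤ N := by
      have h2 : C'.ncard < C.ncard := by
        rw [hC'def]
        exact Set.ncard_diff_singleton_lt_of_mem he hC.1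
      omega
    obtain ⟨hinj', hreach'⟩ := ih C' hC'conf hcard'
    -- preconditions of e lie on the cut of C'
    have hpre_sub : preSet F e ⊆ bpCut F isEvent C' := by
      intro p hp
      have hpcond : ¬ isEvent p := bp_cond_of_pre hon hp hEe
      rw [bp_mem_cut]
      constructor
      · by_cases hmin : ∀ y, ¬ F y p
        · exact Or.inl ⟨hpcond, hmin⟩
        · push_neg at hmin
          obtain ⟨f, hfp⟩ := hmin
          have hfE : isEvent f := bp_event_of_flow hon hfp hpcond
          have hfe : Fstar F f e :=
            Relation.ReflTransGen.head hfp (Relation.ReflTransGen.single hp)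
          have hfC : f ∈ C := hC.2.2.1 e he f hfE hfe
          have hfne : f ≠ e := by
            rintro rfl
            exact bp_no_cycle hon hfp (Relation.ReflTransGen.single hp)
          exact Or.inr ⟨f, ⟨hfC, hfne⟩, hfp⟩
      · rintro ⟨g, hg, hpg⟩
        exact hC.2.2.2 g hg.1 e he
          ⟨g, e, hg.2, hC.2.1 g hg.1, hEe, Relation.ReflTransGen.refl,
            Relation.ReflTransGen.refl, p, hpg, hp⟩
    -- postconditions of e are not consumed within C
    have hpost_fresh : ∀ x, F e x → ¬ ∃ g ∈ C, F x g := by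
      rintro x hex ⟨g, hgC, hxg⟩
      exact hemax g hgC (Relation.TransGen.head hex (Relation.TransGen.single hxg))
    have hcut_eq : bpCut F isEvent C =
        (bpCut F isEvent C' \ preSet F e) ∪ postSet F e := by
      ext x
      rw [Set.mem_union, Set.mem_diff, bp_mem_cut, bp_mem_cut]
      constructor
      · rintro ⟨hbase, hnpre⟩
        by_cases hex : F e x
        · exact Or.inr hex
        · refine Or.inl ⟨⟨?_, ?_⟩, ?_⟩
          · rcases hbase with h | ⟨f, hfC, hfx⟩
            · exact Or.inl h
            · refine Or.inr ⟨f, ⟨hfC, ?_⟩, hfx⟩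
              rintro rfl; exact hex hfx
          · rintro ⟨g, hg, hxg⟩
            exact hnpre ⟨g, hg.1, hxg⟩
          · intro hxe
            exact hnpre ⟨e, he, hxe⟩
      · rintro (⟨⟨hbase, hnpre⟩, hxpre⟩ | hex)
        · refine ⟨?_, ?_⟩
          · rcases hbase with h | ⟨f, hf, hfx⟩
            · exact Or.inl h
            · exact Or.inr ⟨f, hf.1, hfx⟩
          · rintro ⟨g, hgC, hxg⟩
            by_cases hge : g = e
            · exact hxpre (hge ▸ hxg)
            · exact hnpre ⟨g, ⟨hgC, hge⟩, hxg⟩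
        · refine ⟨Or.inr ⟨e, he, hex⟩, hpost_fresh x hex⟩
    -- labelled data
    have hbijpre := hbp.2.1 e hEe
    have hbijpost := hbp.2.2.1 e hEe
    have hpre_img : preT (μt e) = μp '' preSet F e := hbijpre.image_eq.symm
    have hsubT : preT (μt e) ⊆ μp '' bpCut F isEvent C' := by
      rw [hpre_img]; exact Set.image_mono (f := μp) hpre_sub
    have hdis : postT (μt e) ∩ μp '' bpCut F isEvent C' = ∅ :=
      hcf _ _ hreach' hsubT
    have himg_diff : μp '' (bpCut F isEvent C' \ preSet F e) =
        μp '' bpCut F isEvent C' \ preT (μt e) := by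
      apply Set.Subset.antisymm
      · rintro l ⟨x, ⟨hx, hxp⟩, rfl⟩
        refine ⟨⟨x, hx, rfl⟩, ?_⟩
        intro hl
        rw [hpre_img] at hl
        obtain ⟨p, hpmem, hpe⟩ := hl
        exact hxp (hinj' (hpre_sub hpmem) hx hpe ▸ hpmem)
      · rintro l ⟨⟨x, hx, rfl⟩, hl⟩
        exact ⟨x, ⟨hx, fun hxp => hl (hpre_img ▸ ⟨x, hxp, rfl⟩)⟩, rfl⟩
    have himg : μp '' bpCut F isEvent C =
        (μp '' bpCut F isEvent C' \ preT (μt e)) ∪ postT (μt e) := by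
      rw [hcut_eq, Set.image_union, himg_diff, hbijpost.image_eq]
    constructor
    · rw [hcut_eq]
      rintro a (⟨haC', hap⟩ | hapost) b (⟨hbC', hbp2⟩ | hbpost) hab
      · exact hinj' haC' hbC' hab
      · exfalso
        have h1 : μp b ∈ postT (μt e) := hbijpost.mapsTo hbpost
        have h2 : μp a ∈ μp '' bpCut F isEvent C' := ⟨a, haC', rfl⟩
        exact Set.eq_empty_iff_forall_notMem.mp hdis (μp a) ⟨hab ▸ h1, h2⟩
      · exfalso
        have h1 : μp a ∈ postT (μt e) := hbijpost.mapsTo hapost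
        have h2 : μp b ∈ μp '' bpCut F isEvent C' := ⟨b, hbC', rfl⟩
        exact Set.eq_empty_iff_forall_notMem.mp hdis (μp a) ⟨h1, hab ▸ h2⟩
      · exact hbijpost.injOn hapost hbpost hab
    · rw [himg]
      exact hreach'.tail ⟨μt e, ⟨hsubT, hdis⟩, rfl⟩

/-- Concurrent conditions have distinct labels. -/
lemma bp_co_ne (hbp : BranchingProcess F isEvent μp μt preT postT m0)
    (hcf : ∀ m t, ENreachable preT postT m0 m → preT t ⊆ m → postT t ∩ m = ∅)
    {x y : X} (hx : ¬ isEvent x) (hy : ¬ isEvent y)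
    (hco : Co F isEvent x y) : μp x ≠ μp y := by
  have hon := hbp.1
  set C : Set X := {f | isEvent f ∧ (Fstar F f x ∨ Fstar F f y)} with hCdef
  have hfin : C.Finite := by
    apply ((hon.2.2.2.1 x).union (hon.2.2.2.1 y)).subset
    rintro f ⟨_, h | h⟩
    · exact Or.inl h
    · exact Or.inr h
  have hconf : bpConfig F isEvent C := by
    refine ⟨hfin, fun f hf => hf.1, ?_, ?_⟩
    · rintro g ⟨_, hg⟩ f hfE hfg
      rcases hg with h | h
      · exact ⟨hfE, Or.inl (hfg.trans h)⟩
      · exact ⟨hfE, Or.inr (hfg.trans h)⟩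
    · rintro g ⟨_, hgr⟩ g' ⟨_, hg'r⟩ ⟨f1, f2, hne, hE1, hE2, h1, h2, p, hp1, hp2⟩
      rcases hgr with hgx | hgy <;> rcases hg'r with hg'x | hg'y
      · exact hon.2.2.2.2 x ⟨f1, f2, hne, hE1, hE2, h1.trans hgx, h2.trans hg'x, p, hp1, hp2⟩
      · exact hco.2.2.2 ⟨f1, f2, hne, hE1, hE2, h1.trans hgx, h2.trans hg'y, p, hp1, hp2⟩
      · exact hco.2.2.2 ⟨f2, f1, hne.symm, hE2, hE1, h2.trans hg'x, h1.trans hgy, p, hp2, hp1⟩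
      · exact hon.2.2.2.2 y ⟨f1, f2, hne, hE1, hE2, h1.trans hgy, h2.trans hg'y, p, hp1, hp2⟩
  have hmem : ∀ z, ¬ isEvent z → Fstar F z x ∨ Fstar F z y →
      (¬ Fstar F z x → False) → z ∈ bpCut F isEvent C → True := fun _ _ _ _ _ => trivial
  have hxy_mem : ∀ z, ¬ isEvent z →
      (∀ g, F z g → g ∈ C → False) →
      (z = x ∨ z = y) → z ∈ bpCut F isEvent C := by
    intro z hz hng hzxy
    rw [bp_mem_cut]
    constructor
    · by_cases hmin : ∀ w, ¬ F w z
      · exact Or.inl ⟨hz, hmin⟩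
      · push_neg at hmin
        obtain ⟨f, hfz⟩ := hmin
        have hfE : isEvent f := bp_event_of_flow hon hfz hz
        have hfC : f ∈ C := by
          rcases hzxy with rfl | rfl
          · exact ⟨hfE, Or.inl (Relation.ReflTransGen.single hfz)⟩
          · exact ⟨hfE, Or.inr (Relation.ReflTransGen.single hfz)⟩
        exact Or.inr ⟨f, hfC, hfz⟩
    · rintro ⟨g, hgC, hzg⟩
      exact hng g hzg hgC
  have hxmem : x ∈ bpCut F isEvent C := by
    apply hxy_mem x hx _ (Or.inl rfl)
    rintro g hxg ⟨hgE, hgx | hgy⟩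
    · exact bp_no_cycle hon hxg hgx
    · exact hco.2.1 (Relation.ReflTransGen.head hxg hgy)
  have hymem : y ∈ bpCut F isEvent C := by
    apply hxy_mem y hy _ (Or.inr rfl)
    rintro g hyg ⟨hgE, hgx | hgy⟩
    · exact hco.2.2.1 (Relation.ReflTransGen.head hyg hgx)
    · exact bp_no_cycle hon hyg hgy
  obtain ⟨hinj, -⟩ := bp_config_cut hbp hcf C.ncard C hconf le_rfl
  intro heq
  exact hco.1 (hinj hxmem hymem heq)

end AuxBP
theorem stmt_17 {X P T : Type} (F : X → X → Prop) (isEvent : X → Prop)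
    (μp : X → P) (μt : X → T) (preT postT : T → Set P) (m0 : Set P)
    (hbp : BranchingProcess F isEvent μp μt preT postT m0)
    -- contact-freeness of Σ
    (hcf : ∀ m t, ENreachable preT postT m0 m → preT t ⊆ m → postT t ∩ m = ∅)
    (n : ℕ) (γ : ℕ → Set X) (e : ℕ → X)
    -- γ0 < γ1 < … < γn are B-cuts, each step firing a single event
    (hcut : ∀ i ≤ n, BCut F isEvent (γ i))
    (hev : ∀ i < n, isEvent (e i))
    (hen : ∀ i < n, preSet F (e i) ⊆ γ i)
    (hsucc : ∀ i < n, γ (i + 1) = (γ i \ preSet F (e i)) ∪ postSet F (e i))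
    -- the initial marking of the sequence is reachable in Σ
    (hreach : ENreachable preT postT m0 (μp '' γ 0)) :
    -- the labels fire as a firing sequence:  μ(γ i) [μ(e i)⟩ μ(γ (i+1))
    ∀ i < n, ENenabled preT postT (μt (e i)) (μp '' γ i) ∧
      μp '' γ (i + 1) = ENfire preT postT (μt (e i)) (μp '' γ i) := by
  have hinj : ∀ i ≤ n, Set.InjOn μp (γ i) := by
    intro i hi a ha b hb hab
    by_contra hne
    exact bp_co_ne hbp hcf ((hcut i hi).1 a ha) ((hcut i hi).1 b hb)
      ((hcut i hi).2.1 ha hb hne) hab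
  have hstep : ∀ i, i < n → ENreachable preT postT m0 (μp '' γ i) →
      ENenabled preT postT (μt (e i)) (μp '' γ i) ∧
        μp '' γ (i + 1) = ENfire preT postT (μt (e i)) (μp '' γ i) := by
    intro i hi hr
    have hbijpre := hbp.2.1 (e i) (hev i hi)
    have hbijpost := hbp.2.2.1 (e i) (hev i hi)
    have hpre_img : preT (μt (e i)) = μp '' preSet F (e i) := hbijpre.image_eq.symm
    have hsub : preT (μt (e i)) ⊆ μp '' γ i := by
      rw [hpre_img]; exact Set.image_mono (f := μp) (hen i hi)
    have hdis : postT (μt (e i)) ∩ μp '' γ i = ∅ := hcf _ _ hr hsub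
    refine ⟨⟨hsub, hdis⟩, ?_⟩
    rw [hsucc i hi, Set.image_union, hbijpost.image_eq]
    show _ = (μp '' γ i \ preT (μt (e i))) ∪ postT (μt (e i))
    congr 1
    apply Set.Subset.antisymm
    · rintro l ⟨x, ⟨hx, hxp⟩, rfl⟩
      refine ⟨⟨x, hx, rfl⟩, ?_⟩
      intro hl
      rw [hpre_img] at hl
      obtain ⟨p, hpmem, hpe⟩ := hl
      exact hxp (hinj i (le_of_lt hi) (hen i hi hpmem) hx hpe ▸ hpmem)
    · rintro l ⟨⟨x, hx, rfl⟩, hl⟩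
      exact ⟨x, ⟨hx, fun hxp => hl (hpre_img ▸ ⟨x, hxp, rfl⟩)⟩, rfl⟩
  have hreach' : ∀ i, i ≤ n → ENreachable preT postT m0 (μp '' γ i) := by
    intro i
    induction i with
    | zero => intro _; exact hreach
    | succ k ihk =>
      intro hk
      have hkn : k < n := Nat.lt_of_lt_of_le (Nat.lt_succ_self k) hk
      have hr := ihk (le_of_lt hkn)
      obtain ⟨henab, heq⟩ := hstep k hkn hr
      rw [heq]
      exact hr.tail ⟨μt (e k), henab, rfl⟩
  intro i hi
  exact hstep i hi (hreach' i (le_of_lt hi))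
end
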